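/- arXiv:1406.1554 — 2 statements merged into one kernel-verified Lean document; each statement's English description precedes it below -/
import Mathlib

section
/- If every finite loopless 5-edge-connected multigraph with minimum degree at least 6 admits a nowhere-zero 3-flow, then every finite loopless 5-edge-connected multigraph admits a nowhere-zero 3-flow. -/
/-- A finite loopless multigraph: edges `E` with an endpoint map into unordered
pairs of vertices, no edge being a loop. -/
structure Multigraph (V E : Type) where
  ends : E → Sym2 V
  loopless : ∀ e, ¬ (ends e).IsDiag

namespace Multigraph

variable {V E : Type} [Fintype V] [Fintype E] [DecidableEq V]

/-- `D` is an orientation of the edges: it assigns to each edge a tail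
(first component) and a head (second component) consistent with its endpoints. -/
def IsOrientation (G : Multigraph V E) (D : E → V × V) : Prop :=
  ∀ e, s((D e).1, (D e).2) = G.ends e

/-- Out-degree of `v` under the orientation `D`. -/
def outDeg (D : E → V × V) (v : V) : ℕ :=
  (Finset.univ.filter fun e => (D e).1 = v).card

/-- In-degree of `v` under the orientation `D`. -/
def inDeg (D : E → V × V) (v : V) : ℕ :=
  (Finset.univ.filter fun e => (D e).2 = v).card

/-- A modulo 3-orientation: at every vertex, out-degree minus in-degree is
divisible by 3. -/
def IsMod3Orientation (G : Multigraph V E) (D : E → V × V) : Prop :=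
  G.IsOrientation D ∧ ∀ v : V, ((outDeg D v : ℤ) - (inDeg D v : ℤ)) ≡ 0 [ZMOD 3]

/-- A nowhere-zero 3-flow: an orientation `D` together with `f : E → {±1, ±2}`
satisfying Kirchhoff's law at every vertex. -/
def IsNowhereZero3Flow (G : Multigraph V E) (D : E → V × V) (f : E → ℤ) : Prop :=
  G.IsOrientation D ∧ (∀ e, f e = 1 ∨ f e = -1 ∨ f e = 2 ∨ f e = -2) ∧
    ∀ v : V, ∑ e ∈ Finset.univ.filter (fun e => (D e).1 = v), f e =
             ∑ e ∈ Finset.univ.filter (fun e => (D e).2 = v), f e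

def HasNowhereZero3Flow (G : Multigraph V E) : Prop :=
  ∃ D f, G.IsNowhereZero3Flow D f

/-- The edge-cut `∂(X)`: edges with exactly one end in `X`. -/
def cut (G : Multigraph V E) (X : Set V) : Set E :=
  {e | ∃ x ∈ X, ∃ y ∉ X, G.ends e = s(x, y)}

/-- Adjacency after deleting the edge set `S`. -/
def Adj (G : Multigraph V E) (S : Set E) (a b : V) : Prop :=
  ∃ e, e ∉ S ∧ G.ends e = s(a, b)

/-- `G - S` is connected. -/
def ConnectedWithout (G : Multigraph V E) (S : Set E) : Prop :=
  ∀ a b : V, Relation.ReflTransGen (G.Adj S) a b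

/-- `G` is `k`-edge-connected: `G - S` is connected for every edge set `S`
with `|S| < k`. -/
def EdgeConnected (G : Multigraph V E) (k : ℕ) : Prop :=
  ∀ S : Set E, S.ncard < k → G.ConnectedWithout S

/-- The degree of `v`: the number of edges incident with `v`. -/
def degree (G : Multigraph V E) (v : V) : ℕ :=
  (Finset.univ.filter fun e => v ∈ G.ends e).card

/-- `G` is `Z₃`-connected: every `Z₃`-boundary is realized by an orientation
and a nowhere-zero `Z₃`-valued function. -/
def Z3Connected (G : Multigraph V E) : Prop :=
  ∀ β : V → ZMod 3, (∑ v : V, β v) = 0 →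
    ∃ (D : E → V × V) (f : E → ZMod 3), G.IsOrientation D ∧ (∀ e, f e ≠ 0) ∧
      ∀ v : V, (∑ e ∈ Finset.univ.filter (fun e => (D e).1 = v), f e) -
               (∑ e ∈ Finset.univ.filter (fun e => (D e).2 = v), f e) = β v

end Multigraph

/-! Attach to every vertex `v` a new vertex joined to `v` by six parallel edges. This keeps
5-edge-connectivity, since fewer than five deleted edges leave every new vertex attached, and it
raises the minimum degree to six. A nowhere-zero 3-flow of the augmented graph restricts to one of
the original graph: contracting each new vertex onto its anchor turns the new edges into loops,
and loops carry no net flow. -/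

namespace Multigraph

open Finset

section Circulation

variable {V W E F : Type} {M : Type*} [Fintype E] [DecidableEq V] [DecidableEq W]

def IsCirculation [AddCommMonoid M] (D : E → V × V) (f : E → M) : Prop :=
  ∀ v : V, ∑ e ∈ univ.filter (fun e => (D e).1 = v), f e =
           ∑ e ∈ univ.filter (fun e => (D e).2 = v), f e

theorem IsCirculation.map [Fintype V] [AddCommMonoid M] {D : E → V × V} {f : E → M}
    (h : IsCirculation D f) (π : V → W) : IsCirculation (Prod.map π π ∘ D) f := by
  intro w
  have fiberwise (endpoint : E → V) : ∑ e ∈ univ.filter (fun e => π (endpoint e) = w), f e =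
      ∑ v ∈ univ.filter (fun v => π v = w), ∑ e ∈ univ.filter (fun e => endpoint e = v), f e := by
    rw [sum_fiberwise_eq_sum_filter]
    simp only [mem_filter, mem_univ, true_and]
  simp only [Function.comp_apply, Prod.map_fst, Prod.map_snd]
  rw [fiberwise, fiberwise]
  exact sum_congr rfl fun v _ => h v

theorem IsCirculation.comp_inl [Fintype F] [AddCancelCommMonoid M] {D : E ⊕ F → V × V}
    {f : E ⊕ F → M} (h : IsCirculation D f)
    (hloop : ∀ x, (D (Sum.inr x)).1 = (D (Sum.inr x)).2) :
    IsCirculation (D ∘ Sum.inl) (f ∘ Sum.inl) := by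
  intro v
  have hv := h v
  simp only [sum_filter, Fintype.sum_sum_type, hloop] at hv
  simpa only [sum_filter, Function.comp_apply] using add_right_cancel hv

end Circulation

variable {V E : Type}

def addPendants (G : Multigraph V E) (k : ℕ) : Multigraph (V ⊕ V) (E ⊕ V × Fin k) where
  ends := Sum.elim (fun e => (G.ends e).map Sum.inl) (fun p => s(Sum.inl p.1, Sum.inr p.1))
  loopless := by
    rintro (e | p)
    · simpa [Sym2.isDiag_map Sum.inl_injective] using G.loopless e
    · simp

variable (G : Multigraph V E) (k : ℕ)

theorem Adj.symm {S : Set E} {a b : V} (h : G.Adj S a b) : G.Adj S b a := by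
  obtain ⟨e, he, hends⟩ := h
  exact ⟨e, he, hends.trans Sym2.eq_swap⟩

theorem adj_addPendants_inl_inr {S : Set (E ⊕ V × Fin k)} [Finite E] [Finite V]
    (hS : S.ncard < k) (v : V) : (G.addPendants k).Adj S (Sum.inl v) (Sum.inr v) := by
  let pendantEdges : Set (E ⊕ V × Fin k) := Set.range fun i => Sum.inr (v, i)
  have hcard : pendantEdges.ncard = k := by
    rw [Set.ncard_range_of_injective (fun i j hij => by simpa using hij), Nat.card_eq_fintype_card,
      Fintype.card_fin]
  obtain ⟨_, ⟨i, rfl⟩, hi⟩ :=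
    Set.exists_mem_notMem_of_ncard_lt_ncard (hS.trans_eq hcard.symm) (Set.toFinite S)
  exact ⟨_, hi, rfl⟩

theorem reflTransGen_addPendants_inl {S : Set (E ⊕ V × Fin k)} (a b : V)
    (h : G.ConnectedWithout (Sum.inl ⁻¹' S)) :
    Relation.ReflTransGen ((G.addPendants k).Adj S) (Sum.inl a) (Sum.inl b) := by
  refine Relation.ReflTransGen.lift Sum.inl (fun x y hxy => ?_) _ _ (h a b)
  obtain ⟨e, he, hends⟩ := hxy
  exact ⟨Sum.inl e, he, by simp [addPendants, hends]⟩

variable {G} in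
theorem EdgeConnected.addPendants [Finite E] [Finite V] {n : ℕ}
    (hG : G.EdgeConnected n) (hnk : n ≤ k) : (G.addPendants k).EdgeConnected n := by
  intro S hS
  have hS_inl : (Sum.inl ⁻¹' S : Set E).ncard < n := by
    have := Set.ncard_le_ncard (Set.image_preimage_subset Sum.inl S)
    rw [Set.ncard_image_of_injective _ Sum.inl_injective] at this
    omega
  have pendant := G.adj_addPendants_inl_inr k (hS.trans_le hnk)
  have hbase (a b : V) := G.reflTransGen_addPendants_inl k a b (hG _ hS_inl)
  rintro (a | a) (b | b)
  · exact hbase a b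
  · exact (hbase a b).tail (pendant b)
  · exact .head (pendant a).symm (hbase a b)
  · exact .head (pendant a).symm ((hbase a b).tail (pendant b))

theorem le_degree_addPendants [Fintype V] [Fintype E] [DecidableEq V] (w : V ⊕ V) :
    k ≤ (G.addPendants k).degree w := by
  let anchor : V := Sum.elim id id w
  have hmaps : Set.MapsTo (fun i : Fin k => (Sum.inr (anchor, i) : E ⊕ V × Fin k))
      ↑(univ : Finset (Fin k)) ↑(univ.filter fun e => w ∈ (G.addPendants k).ends e) := by
    intro i _
    rw [mem_coe, mem_filter]
    cases w <;> simp [addPendants, anchor]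
  simpa [degree] using card_le_card_of_injOn _ hmaps (fun i _ j _ hij => by simpa using hij)

variable {G k} in
theorem HasNowhereZero3Flow.of_addPendants [Fintype V] [Fintype E] [DecidableEq V]
    (h : (G.addPendants k).HasNowhereZero3Flow) :
    G.HasNowhereZero3Flow := by
  obtain ⟨D, f, hD, hf, hK⟩ := h
  let π : V ⊕ V → V := Sum.elim id id
  have hDπ (x) : s(π (D x).1, π (D x).2) = ((G.addPendants k).ends x).map π := by
    rw [← hD x, Sym2.map_mk]
  refine ⟨Prod.map π π ∘ D ∘ Sum.inl, f ∘ Sum.inl, fun e => ?_, fun e => hf _,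
    (IsCirculation.map hK π).comp_inl fun p => ?_⟩
  · simpa [addPendants, Sym2.map_map, π] using hDπ (Sum.inl e)
  · obtain ⟨h1, h2⟩ : π (D (Sum.inr p)).1 = p.1 ∧ π (D (Sum.inr p)).2 = p.1 := by
      simpa [addPendants, π] using hDπ (Sum.inr p)
    exact h1.trans h2.symm

end Multigraph

/-- If every 5-edge-connected finite loopless multigraph with minimum degree at
least 6 admits a nowhere-zero 3-flow, then every 5-edge-connected finite
loopless multigraph admits a nowhere-zero 3-flow
(Conjecture 1.10 implies Conjecture 1.3). -/
theorem statement4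
    (h : ∀ (V E : Type) [Fintype V] [Fintype E] [DecidableEq V]
        (G : Multigraph V E), G.EdgeConnected 5 → (∀ v : V, 6 ≤ G.degree v) →
        G.HasNowhereZero3Flow) :
    ∀ (V E : Type) [Fintype V] [Fintype E] [DecidableEq V]
        (G : Multigraph V E), G.EdgeConnected 5 → G.HasNowhereZero3Flow := by
  intro V E _ _ _ G hG
  exact (h _ _ (G.addPendants 6) (hG.addPendants 6 (by norm_num))
    (G.le_degree_addPendants 6)).of_addPendants
end

section
/- Let G be a finite loopless multigraph arising from a 5-edge-connected multigraph H by attaching, at each vertex of H, a disjoint copy of the complete graph K_7 identified with H in exactly that one vertex. Then G is 5-edge-connected and has minimum degree at least 6. -/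
namespace Multigraph

/-- Sym2.map of an injective function preserves non-diagonality. -/
theorem isDiag_map_iff {α β : Type*} {f : α → β} (hf : Function.Injective f)
    (z : Sym2 α) : (z.map f).IsDiag ↔ z.IsDiag := by
  induction z using Sym2.ind with
  | _ a b => simp [Sym2.map_pair_eq, Sym2.mk_isDiag_iff, hf.eq_iff]

/-- The vertices of the copy of `K₇` glued at `v`: the vertex `0` of `K₇` is
identified with `v` itself, the other six vertices are the new vertices
`(v, i)`, `i : Fin 6`. -/
def glueVert {V : Type} (v : V) : Fin 7 → V ⊕ V × Fin 6 :=
  Fin.cases (Sum.inl v) (fun i => Sum.inr (v, i))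

theorem glueVert_injective {V : Type} (v : V) :
    Function.Injective (glueVert v) := by
  intro i j hij
  induction i using Fin.cases with
  | zero =>
    induction j using Fin.cases with
    | zero => rfl
    | succ j => simp [glueVert] at hij
  | succ i =>
    induction j using Fin.cases with
    | zero => simp [glueVert] at hij
    | succ j =>
      simp only [glueVert, Fin.cases_succ, Sum.inr.injEq, Prod.mk.injEq] at hij
      rw [hij.2]

/-- The graph obtained from `H` by gluing, at each vertex `v` of `H`, a copy of
the complete graph `K₇` whose vertex `0` is identified with `v`; the copies
glued at distinct vertices are pairwise disjoint.  Its vertices are the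
vertices of `H` together with six new vertices `(v, i)` for each vertex `v`;
its edges are the edges of `H` together with, for each vertex `v`, one edge for
every unordered pair of distinct vertices of the copy of `K₇` at `v`. -/
def glueK7 {V E : Type} (H : Multigraph V E) :
    Multigraph (V ⊕ V × Fin 6) (E ⊕ V × {p : Sym2 (Fin 7) // ¬p.IsDiag}) where
  ends := fun e => match e with
    | Sum.inl e => (H.ends e).map Sum.inl
    | Sum.inr (v, p) => p.val.map (glueVert v)
  loopless := by
    rintro (e | ⟨v, p, hp⟩) h
    · exact H.loopless e ((isDiag_map_iff Sum.inl_injective _).mp h)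
    · exact hp ((isDiag_map_iff (glueVert_injective v) _).mp h)

end Multigraph

namespace Multigraph

variable {V E : Type} [Fintype V] [Fintype E] [DecidableEq V]

/-- Edge of the `K₇` copy at `v` joining `x` and `y` (junk if `x = y`). -/
def pe (v : V) (x y : Fin 7) : E ⊕ V × {p : Sym2 (Fin 7) // ¬p.IsDiag} :=
  if h : x = y then Sum.inr (v, ⟨s(0,1), by decide⟩)
  else Sum.inr (v, ⟨s(x,y), by simpa [Sym2.mk_isDiag_iff] using h⟩)

lemma pe_eq_pe {v v' : V} {x y x' y' : Fin 7} (h : x ≠ y) (h' : x' ≠ y')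
    (he : (pe v x y : E ⊕ V × {p : Sym2 (Fin 7) // ¬p.IsDiag}) = pe v' x' y') :
    s(x, y) = s(x', y') := by
  simp only [pe, dif_neg h, dif_neg h', Sum.inr.injEq, Prod.mk.injEq,
    Subtype.mk.injEq] at he
  exact he.2

lemma pe_ends (H : Multigraph V E) (v : V) {x y : Fin 7} (h : x ≠ y) :
    (glueK7 H).ends (pe v x y) = s(glueVert v x, glueVert v y) := by
  simp only [pe, dif_neg h, glueK7, Sym2.map_pair_eq]

lemma adj_of (H : Multigraph V E) (S : Set (E ⊕ V × {p : Sym2 (Fin 7) // ¬p.IsDiag}))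
    (v : V) {x y : Fin 7} (h : x ≠ y) (hs : pe v x y ∉ S) :
    (glueK7 H).Adj S (glueVert v x) (glueVert v y) :=
  ⟨pe v x y, hs, pe_ends H v h⟩

lemma k7_conn (H : Multigraph V E) (S : Set (E ⊕ V × {p : Sym2 (Fin 7) // ¬p.IsDiag}))
    (hS : S.ncard < 5) (v : V) (a b : Fin 7) :
    Relation.ReflTransGen ((glueK7 H).Adj S) (glueVert v a) (glueVert v b) := by
  classical
  rcases eq_or_ne a b with rfl | hab
  · exact .refl
  by_cases hd : (pe v a b : E ⊕ V × {p : Sym2 (Fin 7) // ¬p.IsDiag}) ∈ S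
  · have hex : ∃ c : Fin 7, c ≠ a ∧ c ≠ b ∧
        (pe v a c : E ⊕ V × {p : Sym2 (Fin 7) // ¬p.IsDiag}) ∉ S ∧
        (pe v c b : E ⊕ V × {p : Sym2 (Fin 7) // ¬p.IsDiag}) ∉ S := by
      by_contra hcon
      push_neg at hcon
      set g : Fin 7 → E ⊕ V × {p : Sym2 (Fin 7) // ¬p.IsDiag} := fun c =>
        if c = a then pe v a b else if pe v a c ∈ S then pe v a c else pe v c b with hg
      have hmaps : ∀ c ∈ Finset.univ.erase b, g c ∈ S := by
        intro c hc
        have hcb : c ≠ b := Finset.ne_of_mem_erase hc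
        by_cases hca : c = a
        · simp [hg, hca, hd]
        · by_cases h1 : (pe v a c : E ⊕ V × {p : Sym2 (Fin 7) // ¬p.IsDiag}) ∈ S
          · simp [hg, hca, h1]
          · have := hcon c hca hcb h1
            simp [hg, hca, h1, this]
      have hinj : Set.InjOn g (Finset.univ.erase b) := by
        intro c hc c' hc' hgcc
        have hcb : c ≠ b := by simpa using hc
        have hcb' : c' ≠ b := by simpa using hc'
        simp only [hg] at hgcc
        by_cases hca : c = a <;> by_cases hca' : c' = a
        · rw [hca, hca']
        · exfalso
          rw [if_pos hca, if_neg hca'] at hgcc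
          by_cases h1 : (pe v a c' : E ⊕ V × {p : Sym2 (Fin 7) // ¬p.IsDiag}) ∈ S
          · rw [if_pos h1] at hgcc
            have := Sym2.eq_iff.mp (pe_eq_pe hab (fun h => hca' h.symm) hgcc)
            tauto
          · rw [if_neg h1] at hgcc
            have := Sym2.eq_iff.mp (pe_eq_pe hab hcb' hgcc)
            tauto
        · exfalso
          rw [if_neg hca, if_pos hca'] at hgcc
          by_cases h1 : (pe v a c : E ⊕ V × {p : Sym2 (Fin 7) // ¬p.IsDiag}) ∈ S
          · rw [if_pos h1] at hgcc
            have := Sym2.eq_iff.mp (pe_eq_pe (fun h => hca h.symm) hab hgcc)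
            tauto
          · rw [if_neg h1] at hgcc
            have := Sym2.eq_iff.mp (pe_eq_pe hcb hab hgcc)
            tauto
        · rw [if_neg hca, if_neg hca'] at hgcc
          by_cases h1 : (pe v a c : E ⊕ V × {p : Sym2 (Fin 7) // ¬p.IsDiag}) ∈ S <;>
            by_cases h2 : (pe v a c' : E ⊕ V × {p : Sym2 (Fin 7) // ¬p.IsDiag}) ∈ S
          · rw [if_pos h1, if_pos h2] at hgcc
            have := Sym2.eq_iff.mp (pe_eq_pe (fun h => hca h.symm) (fun h => hca' h.symm) hgcc)
            tauto
          · rw [if_pos h1, if_neg h2] at hgcc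
            have := Sym2.eq_iff.mp (pe_eq_pe (fun h => hca h.symm) hcb' hgcc)
            exfalso; tauto
          · rw [if_neg h1, if_pos h2] at hgcc
            have := Sym2.eq_iff.mp (pe_eq_pe hcb (fun h => hca' h.symm) hgcc)
            exfalso; tauto
          · rw [if_neg h1, if_neg h2] at hgcc
            have := Sym2.eq_iff.mp (pe_eq_pe hcb hcb' hgcc)
            tauto
      have hfin : S.Finite := Set.toFinite S
      have hle : (Finset.univ.erase b).card ≤ hfin.toFinset.card :=
        Finset.card_le_card_of_injOn g
          (fun c hc => hfin.mem_toFinset.mpr (hmaps c hc)) hinj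
      rw [Finset.card_erase_of_mem (Finset.mem_univ _)] at hle
      rw [← Set.ncard_eq_toFinset_card _ hfin] at hle
      simp at hle
      omega
    obtain ⟨c, hca, hcb, h1, h2⟩ := hex
    exact Relation.ReflTransGen.head (adj_of H S v (fun h => hca h.symm) h1)
      (Relation.ReflTransGen.single (adj_of H S v hcb h2))
  · exact Relation.ReflTransGen.single (adj_of H S v hab hd)

end Multigraph

theorem statement5' {V E : Type} [Fintype V] [Fintype E] [DecidableEq V]
    (H : Multigraph V E) (hH : H.EdgeConnected 5) :
    (Multigraph.glueK7 H).EdgeConnected 5 ∧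
      ∀ w : V ⊕ V × Fin 6, 6 ≤ (Multigraph.glueK7 H).degree w := by
  classical
  open Multigraph in
  constructor
  · intro S hS a b
    -- every vertex connects to the base vertex of its K7 copy
    have base : ∀ w : V ⊕ V × Fin 6, ∃ v : V,
        Relation.ReflTransGen ((glueK7 H).Adj S) (Sum.inl v) w ∧
        Relation.ReflTransGen ((glueK7 H).Adj S) w (Sum.inl v) := by
      rintro (v | ⟨v, i⟩)
      · exact ⟨v, .refl, .refl⟩
      · refine ⟨v, ?_, ?_⟩
        · have := k7_conn H S hS v 0 i.succ
          simpa [glueVert] using this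
        · have := k7_conn H S hS v i.succ 0
          simpa [glueVert] using this
    obtain ⟨va, h1a, h2a⟩ := base a
    obtain ⟨vb, h1b, h2b⟩ := base b
    refine h2a.trans (Relation.ReflTransGen.trans ?_ h1b)
    -- connect base vertices through H
    set SE : Set E := Sum.inl ⁻¹' S with hSE
    have hcard : SE.ncard < 5 := by
      have h1 : (Sum.inl '' SE : Set (E ⊕ V × {p : Sym2 (Fin 7) // ¬p.IsDiag})) ⊆ S :=
        Set.image_preimage_subset _ _
      calc SE.ncard = (Sum.inl '' SE).ncard :=
            (Set.ncard_image_of_injective _ Sum.inl_injective).symm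
        _ ≤ S.ncard := Set.ncard_le_ncard h1 (Set.toFinite S)
        _ < 5 := hS
    have hpath := hH SE hcard va vb
    refine hpath.lift (f := Sum.inl) ?_
    rintro x y ⟨e, heS, hee⟩
    exact ⟨Sum.inl e, heS, by simp [glueK7, hee, Sym2.map_pair_eq]⟩
  · intro w
    obtain ⟨v, j, hw⟩ : ∃ (v : V) (j : Fin 7), glueVert v j = w := by
      rcases w with v | ⟨v, i⟩
      · exact ⟨v, 0, rfl⟩
      · exact ⟨v, i.succ, by simp [glueVert]⟩
    subst hw
    have hsub : (Finset.univ.erase j).image (fun c => (pe v j c : E ⊕ V × {p : Sym2 (Fin 7) // ¬p.IsDiag})) ⊆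
        Finset.univ.filter fun e => glueVert v j ∈ (glueK7 H).ends e := by
      intro e he
      simp only [Finset.mem_image, Finset.mem_erase] at he
      obtain ⟨c, ⟨hcj, -⟩, rfl⟩ := he
      simp only [Finset.mem_filter, Finset.mem_univ, true_and]
      rw [pe_ends H v (fun h => hcj h.symm)]
      exact Sym2.mem_mk_left _ _
    have hinj : Set.InjOn (fun c => (pe v j c : E ⊕ V × {p : Sym2 (Fin 7) // ¬p.IsDiag}))
        (Finset.univ.erase j) := by
      intro c hc c' hc' hcc
      have hcj : c ≠ j := by simpa using hc
      have hcj' : c' ≠ j := by simpa using hc'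
      have := Sym2.eq_iff.mp (pe_eq_pe (fun h => hcj h.symm) (fun h => hcj' h.symm) hcc)
      tauto
    calc 6 = (Finset.univ.erase j).card := by
          rw [Finset.card_erase_of_mem (Finset.mem_univ _)]; simp
      _ = ((Finset.univ.erase j).image
            (fun c => (pe v j c : E ⊕ V × {p : Sym2 (Fin 7) // ¬p.IsDiag}))).card :=
          (Finset.card_image_of_injOn hinj).symm
      _ ≤ _ := Finset.card_le_card hsub


/-- If `G` arises from a 5-edge-connected finite loopless multigraph `H` by
gluing a disjoint copy of `K₇` at each vertex of `H`, then `G` is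
5-edge-connected and has minimum degree at least 6. -/
theorem statement5 {V E : Type} [Fintype V] [Fintype E] [DecidableEq V]
    (H : Multigraph V E) (hH : H.EdgeConnected 5) :
    (Multigraph.glueK7 H).EdgeConnected 5 ∧
      ∀ w : V ⊕ V × Fin 6, 6 ≤ (Multigraph.glueK7 H).degree w :=
  statement5' H hH
end
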